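/- Let σ be a permutation of {1,...,n}. A function C: P_n^σ × P_n^σ → A (A an abelian group) satisfies the quandle 2-cocycle condition C(p,r) + C(p*r, q*r) = C(p,q) + C(p*q, r) for all p,q,r if and only if for all nonzero p,q,r: C(0,σ(q)) = C(0,q), C(σ(p),σ(q)) = C(p,q), and C(σ(p),r) = C(p,r). -/

import Mathlib

/-!
Since `x * y = x` whenever `y ≠ 0`, the cocycle condition at `(p, q, r)` is trivial when
`q, r ≠ 0`, is the relation `C(σp, σq) = C(p, q)` when `r = 0 ≠ q`, and is the relation
`C(σp, r) = C(p, r)` when `q = 0 ≠ r`; the case `q = r = 0` holds because `σ 0 = 0`.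
-/

/-- The operation of `P_n^σ` on `{0,1,...,n}`: `x*y = x` if `y ≠ 0`, `x*0 = σ x`
(with `σ` a permutation fixing `0`, encoding a permutation of `{1,...,n}`). -/
def pOp {n : ℕ} (σ : Equiv.Perm (Fin (n + 1))) (x y : Fin (n + 1)) : Fin (n + 1) :=
  if y = 0 then σ x else x

section

variable {n : ℕ} {σ : Equiv.Perm (Fin (n + 1))} {A : Type*} [AddCommGroup A]
  {C : Fin (n + 1) → Fin (n + 1) → A}

@[simp]
theorem pOp_zero_right (x : Fin (n + 1)) : pOp σ x 0 = σ x := if_pos rfl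

@[simp]
theorem pOp_of_ne_zero {y : Fin (n + 1)} (hy : y ≠ 0) (x : Fin (n + 1)) : pOp σ x y = x :=
  if_neg hy

variable (σ C) in
def IsQuandleCocycle : Prop :=
  ∀ p q r, C p r + C (pOp σ p r) (pOp σ q r) = C p q + C (pOp σ p q) r

theorem IsQuandleCocycle.apply_perm_perm (h : IsQuandleCocycle σ C) (p : Fin (n + 1))
    {q : Fin (n + 1)} (hq : q ≠ 0) : C (σ p) (σ q) = C p q := by
  have key := h p q 0
  simp only [pOp_zero_right, pOp_of_ne_zero hq] at key
  exact add_left_cancel (key.trans (add_comm _ _))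

theorem IsQuandleCocycle.apply_perm_left (h : IsQuandleCocycle σ C) (p : Fin (n + 1))
    {r : Fin (n + 1)} (hr : r ≠ 0) : C (σ p) r = C p r := by
  have key := h p 0 r
  simp only [pOp_zero_right, pOp_of_ne_zero hr] at key
  exact (add_left_cancel ((add_comm _ _).trans key)).symm

theorem isQuandleCocycle_iff (hσ0 : σ 0 = 0) :
    IsQuandleCocycle σ C ↔ (∀ p q, q ≠ 0 → C (σ p) (σ q) = C p q) ∧
      (∀ p r, r ≠ 0 → C (σ p) r = C p r) := by
  refine ⟨fun h => ⟨fun p _ => h.apply_perm_perm p, fun p _ => h.apply_perm_left p⟩, ?_⟩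
  rintro ⟨hperm, hleft⟩ p q r
  rcases eq_or_ne q 0 with rfl | hq <;> rcases eq_or_ne r 0 with rfl | hr
  · simp [hσ0]
  · simp only [pOp_zero_right, pOp_of_ne_zero hr, hleft p r hr]
    abel
  · simp only [pOp_zero_right, pOp_of_ne_zero hq, hperm p q hq]
    abel
  · simp only [pOp_of_ne_zero hq, pOp_of_ne_zero hr]
    abel

end

/-- A function `C` on `P_n^σ × P_n^σ` with values in an abelian group satisfies the
quandle 2-cocycle condition iff it satisfies the three relations
`C(0,σq) = C(0,q)`, `C(σp,σq) = C(p,q)`, `C(σp,r) = C(p,r)` for nonzero `p,q,r`. -/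
theorem cocycle_condition_iff {n : ℕ} (σ : Equiv.Perm (Fin (n + 1))) (hσ0 : σ 0 = 0)
    (A : Type) [AddCommGroup A] (C : Fin (n + 1) → Fin (n + 1) → A) :
    (∀ p q r : Fin (n + 1),
        C p r + C (pOp σ p r) (pOp σ q r) = C p q + C (pOp σ p q) r) ↔
    (∀ p q r : Fin (n + 1), p ≠ 0 → q ≠ 0 → r ≠ 0 →
        C 0 (σ q) = C 0 q ∧ C (σ p) (σ q) = C p q ∧ C (σ p) r = C p r) := by
  refine (isQuandleCocycle_iff hσ0).trans ⟨?_, fun h => ⟨fun p q hq => ?_, fun p r hr => ?_⟩⟩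
  · rintro ⟨hperm, hleft⟩ p q r - hq hr
    exact ⟨by simpa [hσ0] using hperm 0 q hq, hperm p q hq, hleft p r hr⟩
  · rcases eq_or_ne p 0 with rfl | hp
    · rw [hσ0, (h q q q hq hq hq).1]
    · exact (h p q q hp hq hq).2.1
  · rcases eq_or_ne p 0 with rfl | hp
    · rw [hσ0]
    · exact (h p r r hp hr hr).2.2
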